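/- Let A ∈ ℝ^{m×n} have rank m and let V ∈ ℝ^{n×(n−m)} be a matrix whose columns form a basis of the null space of A. Then for any x, s ∈ ℝⁿ with x, s > 0 componentwise, the (m + (n−m)) columns of the n×n matrix [−XAᵀ | SV] (where X = diag(x), S = diag(s)) are linearly independent; i.e., the OSS coefficient matrix [−XAᵀ, SV] is invertible. -/

import Mathlib

open Matrix

/-- A real matrix with full column rank has injective `mulVec`. -/
lemma aux_mulVec_injective {p k : ℕ} (M : Matrix (Fin p) (Fin k) ℝ) (h : M.rank = k) :
    Function.Injective M.mulVec := by
  rw [← Matrix.coe_mulVecLin, ← LinearMap.ker_eq_bot]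
  have h1 := LinearMap.finrank_range_add_finrank_ker M.mulVecLin
  rw [Module.finrank_fintype_fun_eq_card, Fintype.card_fin] at h1
  have h2 : Module.finrank ℝ (LinearMap.range M.mulVecLin) = k := h
  rw [← Submodule.finrank_eq_zero (R := ℝ)]
  omega

/-- If `A` has full row rank `m` and the columns of `V` form a basis of
the null space of `A` (`AV = 0`, `rank V = n − m`), then for positive diagonal
`X = diag x`, `S = diag s`, the `n` columns of the OSS coefficient matrix
`[−XAᵀ | SV]` are linearly independent. -/
theorem oss_matrix_columns_linearIndependent {m n : ℕ} (hmn : m ≤ n)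
    (A : Matrix (Fin m) (Fin n) ℝ) (hA : A.rank = m)
    (V : Matrix (Fin n) (Fin (n - m)) ℝ)
    (hAV : A * V = 0) (hV : V.rank = n - m)
    (x s : Fin n → ℝ) (hx : ∀ i, 0 < x i) (hs : ∀ i, 0 < s i) :
    LinearIndependent ℝ
      (fun j : Fin m ⊕ Fin (n - m) =>
        (Matrix.fromCols (-(Matrix.diagonal x * Aᵀ)) (Matrix.diagonal s * V))ᵀ j) := by
  change LinearIndependent ℝ (Matrix.col (Matrix.fromCols (-(Matrix.diagonal x * Aᵀ)) (Matrix.diagonal s * V)))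
  rw [← Matrix.mulVec_injective_iff, ← Matrix.coe_mulVecLin, ← LinearMap.ker_eq_bot,
    LinearMap.ker_eq_bot']
  intro g hg
  -- split g into its two components
  set u : Fin m → ℝ := fun i => g (Sum.inl i) with hu
  set v : Fin (n - m) → ℝ := fun i => g (Sum.inr i) with hvdef
  have hgelim : g = Sum.elim u v := by
    funext j; cases j <;> rfl
  rw [Matrix.coe_mulVecLin, hgelim, Matrix.fromCols_mulVec_sumElim] at hg
  set w : Fin n → ℝ := Aᵀ *ᵥ u with hw
  set z : Fin n → ℝ := V *ᵥ v with hz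
  -- componentwise equation: -(x i * w i) + s i * z i = 0
  have hcomp : ∀ i, x i * w i = s i * z i := by
    intro i
    have := congrFun hg i
    simp only [Pi.add_apply, Pi.zero_apply, Matrix.neg_mulVec, Pi.neg_apply,
      ← Matrix.mulVec_mulVec, Matrix.mulVec_diagonal, ← hw, ← hz] at this
    linarith
  -- orthogonality: w ⬝ᵥ z = 0
  have horth : w ⬝ᵥ z = 0 := by
    rw [hw, hz, Matrix.mulVec_transpose, ← dotProduct_mulVec,
      Matrix.mulVec_mulVec, hAV, Matrix.zero_mulVec, dotProduct_zero]
  -- each term of the dot product is nonneg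
  have hterm : ∀ i, w i * z i = s i / x i * (z i) ^ 2 := by
    intro i
    have hxi := (hx i).ne'
    have h := hcomp i
    field_simp
    calc w i * z i * x i = z i * (x i * w i) := by ring
      _ = z i * (s i * z i) := by rw [h]
      _ = z i ^ 2 * s i := by ring
  have hz0 : ∀ i, z i = 0 := by
    have hsum : ∑ i, s i / x i * (z i) ^ 2 = 0 := by
      rw [← horth, dotProduct]
      exact Finset.sum_congr rfl fun i _ => (hterm i).symm
    intro i
    have hnn : ∀ j ∈ Finset.univ, (0 : ℝ) ≤ s j / x j * (z j) ^ 2 := fun j _ =>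
      mul_nonneg (le_of_lt (div_pos (hs j) (hx j))) (sq_nonneg _)
    have := (Finset.sum_eq_zero_iff_of_nonneg hnn).mp hsum i (Finset.mem_univ i)
    have hpos := div_pos (hs i) (hx i)
    have : (z i) ^ 2 = 0 := by
      rcases mul_eq_zero.mp this with h | h
      · exact absurd h hpos.ne'
      · exact h
    exact pow_eq_zero_iff (by norm_num) |>.mp this
  have hw0 : ∀ i, w i = 0 := by
    intro i
    have := hcomp i
    rw [hz0 i, mul_zero] at this
    exact (mul_eq_zero.mp this).resolve_left (hx i).ne'
  -- conclude v = 0 from injectivity of V.mulVec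
  have hv0 : v = 0 := by
    have hinj := aux_mulVec_injective V hV
    have : V *ᵥ v = V *ᵥ 0 := by
      rw [Matrix.mulVec_zero]; funext i; exact hz0 i
    exact hinj this
  -- conclude u = 0 from injectivity of Aᵀ.mulVec
  have hu0 : u = 0 := by
    have hAt : Aᵀ.rank = m := by rw [Matrix.rank_transpose, hA]
    have hinj := aux_mulVec_injective Aᵀ hAt
    have : Aᵀ *ᵥ u = Aᵀ *ᵥ 0 := by
      rw [Matrix.mulVec_zero]; funext i; exact hw0 i
    exact hinj this
  rw [hgelim, hu0, hv0]
  funext j; cases j <;> rfl
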